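/- Let m ≥ 2 be an even integer, k ≥ 1 an integer, and Q = m/2 + k. Define V(r) = 2^{m+k} · sinh(r/2)^{m+k} · cosh(r/2)^{k} for r > 0. Then for every r > 0, V(r)^{−1/2} · (d²/dr²)(V^{1/2})(r) − Q²/4 = (m(Q−1)/8) · sinh(r/2)^{−2} + (k/2)·(k/2 − 1) · sinh(r)^{−2}. -/

import Mathlib

/-!
Write `√V = 2^a · S^a C^b` with `S = sinh(r/2)`, `C = cosh(r/2)`, `a = (m+k)/2`, `b = k/2`.
For `f = S^a C^b` the logarithmic derivative is `h = (a/2) C/S + (b/2) S/C`, so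
`f''/f = h² + h' = (a+b)²/4 + a(a-1)/(4S²) - b(b-1)/(4C²)`, using `C² = 1 + S²`.
The claim follows from `1/C² = 1/S² - 4/sinh² r`, since `sinh r = 2SC`.
-/

/-- The radial volume density of a Damek–Ricci space with parameters `m, k`:
`V(r) = 2^{m+k} sinh(r/2)^{m+k} cosh(r/2)^k`. -/
noncomputable def Vdens (m k : ℕ) (r : ℝ) : ℝ :=
  2 ^ (m + k) * Real.sinh (r / 2) ^ (m + k) * Real.cosh (r / 2) ^ k

open Real Filter Topology

noncomputable def sinhCoshPow (a b r : ℝ) : ℝ :=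
  sinh (r / 2) ^ a * cosh (r / 2) ^ b

noncomputable def sinhCoshLogDeriv (a b r : ℝ) : ℝ :=
  a / 2 * (cosh (r / 2) / sinh (r / 2)) + b / 2 * (sinh (r / 2) / cosh (r / 2))

lemma hasDerivAt_sinh_half (r : ℝ) : HasDerivAt (fun x => sinh (x / 2)) (cosh (r / 2) / 2) r := by
  simpa [div_eq_mul_inv] using ((hasDerivAt_id r).div_const 2).sinh

lemma hasDerivAt_cosh_half (r : ℝ) : HasDerivAt (fun x => cosh (x / 2)) (sinh (r / 2) / 2) r := by
  simpa [div_eq_mul_inv] using ((hasDerivAt_id r).div_const 2).cosh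

section

variable {r : ℝ}

lemma sinh_half_pos (hr : 0 < r) : 0 < sinh (r / 2) :=
  sinh_pos_iff.mpr (half_pos hr)

lemma sinhCoshPow_pos (a b : ℝ) (hr : 0 < r) : 0 < sinhCoshPow a b r :=
  mul_pos (rpow_pos_of_pos (sinh_half_pos hr) _) (rpow_pos_of_pos (cosh_pos _) _)

lemma hasDerivAt_sinhCoshPow (a b : ℝ) (hr : 0 < r) :
    HasDerivAt (sinhCoshPow a b) (sinhCoshPow a b r * sinhCoshLogDeriv a b r) r := by
  have hS : sinh (r / 2) ≠ 0 := (sinh_half_pos hr).ne'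
  have hC : cosh (r / 2) ≠ 0 := (cosh_pos _).ne'
  refine (((hasDerivAt_sinh_half r).rpow_const (p := a) (Or.inl hS)).mul
    ((hasDerivAt_cosh_half r).rpow_const (p := b) (Or.inl hC))).congr_deriv ?_
  rw [sinhCoshPow, sinhCoshLogDeriv, rpow_sub_one hS, rpow_sub_one hC]
  field_simp

lemma hasDerivAt_sinhCoshLogDeriv (a b : ℝ) (hr : 0 < r) :
    HasDerivAt (sinhCoshLogDeriv a b)
      (-(a / (4 * sinh (r / 2) ^ 2)) + b / (4 * cosh (r / 2) ^ 2)) r := by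
  have hS : sinh (r / 2) ≠ 0 := (sinh_half_pos hr).ne'
  have hC : cosh (r / 2) ≠ 0 := (cosh_pos _).ne'
  refine ((((hasDerivAt_cosh_half r).div (hasDerivAt_sinh_half r) hS).const_mul (a / 2)).add
    (((hasDerivAt_sinh_half r).div (hasDerivAt_cosh_half r) hC).const_mul (b / 2))).congr_deriv ?_
  have hC2 := cosh_sq (r / 2)
  field_simp
  rw [hC2]
  ring

lemma deriv_deriv_sinhCoshPow (a b : ℝ) (hr : 0 < r) :
    deriv (deriv (sinhCoshPow a b)) r = sinhCoshPow a b r *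
      ((a + b) ^ 2 / 4 + a * (a - 1) / (4 * sinh (r / 2) ^ 2)
        - b * (b - 1) / (4 * cosh (r / 2) ^ 2)) := by
  have hderiv : deriv (sinhCoshPow a b) =ᶠ[𝓝 r]
      fun x => sinhCoshPow a b x * sinhCoshLogDeriv a b x := by
    filter_upwards [eventually_gt_nhds hr] with x hx using (hasDerivAt_sinhCoshPow a b hx).deriv
  rw [hderiv.deriv_eq]
  refine ((hasDerivAt_sinhCoshPow a b hr).mul (hasDerivAt_sinhCoshLogDeriv a b hr)).deriv.trans ?_
  have hC2 := cosh_sq (r / 2)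
  rw [sinhCoshLogDeriv]
  field_simp
  rw [hC2]
  ring

end

lemma sqrt_pow_eq_rpow {x : ℝ} (hx : 0 ≤ x) (n : ℕ) : √(x ^ n) = x ^ ((n : ℝ) / 2) := by
  rw [sqrt_eq_rpow, ← rpow_natCast, ← rpow_mul hx]
  ring_nf

lemma sqrt_Vdens {r : ℝ} (m k : ℕ) (hr : 0 ≤ r) :
    √(Vdens m k r) = 2 ^ (((m : ℝ) + k) / 2) * sinhCoshPow (((m : ℝ) + k) / 2) ((k : ℝ) / 2) r := by
  have hS : 0 ≤ sinh (r / 2) := sinh_nonneg_iff.mpr (by positivity)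
  rw [Vdens, sqrt_mul (by positivity), sqrt_mul (by positivity), sqrt_pow_eq_rpow zero_le_two,
    sqrt_pow_eq_rpow hS, sqrt_pow_eq_rpow (cosh_pos _).le, sinhCoshPow]
  push_cast
  ring

theorem stmt5_general (m k : ℕ) :
    ∀ r : ℝ, 0 < r →
      (Real.sqrt (Vdens m k r))⁻¹ *
          deriv (deriv (fun s : ℝ => Real.sqrt (Vdens m k s))) r -
          ((m : ℝ) / 2 + k) ^ 2 / 4 =
        (m : ℝ) * (((m : ℝ) / 2 + k) - 1) / 8 * (Real.sinh (r / 2) ^ 2)⁻¹ +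
          ((k : ℝ) / 2) * ((k : ℝ) / 2 - 1) * (Real.sinh r ^ 2)⁻¹ := by
  intro r hr
  have hsqrt : (fun s => √(Vdens m k s)) =ᶠ[𝓝 r]
      fun s => 2 ^ (((m : ℝ) + k) / 2) * sinhCoshPow (((m : ℝ) + k) / 2) ((k : ℝ) / 2) s := by
    filter_upwards [eventually_gt_nhds hr] with s hs using sqrt_Vdens m k hs.le
  rw [hsqrt.deriv.deriv_eq, deriv_const_mul_field', deriv_const_mul_field']
  beta_reduce
  have hsinh : sinh r = 2 * sinh (r / 2) * cosh (r / 2) := by rw [← sinh_two_mul]; ring_nf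
  rw [deriv_deriv_sinhCoshPow _ _ hr, sqrt_Vdens m k hr.le, hsinh]
  have hf := sinhCoshPow_pos (((m : ℝ) + k) / 2) ((k : ℝ) / 2) hr
  have hC2 := cosh_sq (r / 2)
  field_simp
  rw [hC2]
  ring

/-- With `Q = m/2 + k`, for every `r > 0`,
`V(r)^{-1/2} (d²/dr²)(V^{1/2})(r) - Q²/4
  = (m(Q-1)/8) sinh(r/2)^{-2} + (k/2)(k/2 - 1) sinh(r)^{-2}`. -/
theorem stmt5 (m k : ℕ) (hm : Even m) (hm2 : 2 ≤ m) (hk : 1 ≤ k) :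
    ∀ r : ℝ, 0 < r →
      (Real.sqrt (Vdens m k r))⁻¹ *
          deriv (deriv (fun s : ℝ => Real.sqrt (Vdens m k s))) r -
          ((m : ℝ) / 2 + k) ^ 2 / 4 =
        (m : ℝ) * (((m : ℝ) / 2 + k) - 1) / 8 * (Real.sinh (r / 2) ^ 2)⁻¹ +
          ((k : ℝ) / 2) * ((k : ℝ) / 2 - 1) * (Real.sinh r ^ 2)⁻¹ :=
  stmt5_general m k
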